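/- Let γ₃ ∈ (0,1), λ ∈ (0,1), n ∈ ℕ with n ≥ 1, and let t ≥ 0 satisfy n t^{γ₃} < 1. Then |E_{γ₃,1+γ₃}(−n λ^{γ₃} t^{γ₃}) − E_{γ₃,1+γ₃}(−n t^{γ₃})| ≤ 2 n t^{γ₃} / (Γ(1+x*) (1 − n t^{γ₃})). -/

import Mathlib

/-! Both arguments lie in `[-q, 0]` with `q = n t^γ₃ < 1`, and every `Γ(γ₃ k + 1 + γ₃)` is
at least `Γ(1 + x*)`. Hence each Mittag-Leffler series differs from its constant term
`1 / Γ(1 + γ₃)` by at most the geometric tail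
`Σ_{k ≥ 1} q^k / Γ(1 + x*) = q / (Γ(1 + x*) (1 - q))`, and the triangle inequality doubles
this. -/

open Set

/-- The minimum value of the Euler Gamma function on `(0, ∞)`, i.e. `Γ(1 + x*)`. -/
noncomputable def GammaMin : ℝ := sInf (Real.Gamma '' Set.Ioi (0 : ℝ))

/-- Two-parametric Mittag-Leffler function `E_{a,b}(z) = Σ_{k} z^k / Γ(a k + b)`. -/
noncomputable def mittagLeffler (a b z : ℝ) : ℝ :=
  ∑' k : ℕ, z ^ k / Real.Gamma (a * k + b)

open Real

lemma isLeast_GammaMin : IsLeast (Gamma '' Ioi 0) GammaMin := by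
  obtain ⟨x₀, hx₀, hmin⟩ := exists_isMinOn_Gamma_Ioi
  have h : IsLeast (Gamma '' Ioi 0) (Gamma x₀) :=
    ⟨mem_image_of_mem _ (zero_lt_one.trans hx₀.1),
      by rintro _ ⟨y, hy, rfl⟩; exact hmin hy⟩
  unfold GammaMin
  rwa [h.csInf_eq]

lemma GammaMin_pos : 0 < GammaMin := by
  obtain ⟨⟨x, hx, hGamma⟩, -⟩ := isLeast_GammaMin
  exact hGamma ▸ Gamma_pos_of_pos hx

lemma GammaMin_le_Gamma {x : ℝ} (hx : 0 < x) : GammaMin ≤ Gamma x :=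
  isLeast_GammaMin.2 (mem_image_of_mem _ hx)

section MittagLeffler

variable {a b : ℝ} (ha : 0 ≤ a) (hb : 0 < b)
include ha hb

lemma norm_pow_div_Gamma_le (z : ℝ) (k : ℕ) :
    ‖z ^ k / Gamma (a * k + b)‖ ≤ |z| ^ k / GammaMin := by
  have hpos : 0 < a * k + b := by positivity
  rw [Real.norm_eq_abs, abs_div, abs_pow, abs_of_pos (Gamma_pos_of_pos hpos)]
  exact div_le_div_of_nonneg_left (by positivity) GammaMin_pos (GammaMin_le_Gamma hpos)

lemma summable_mittagLeffler {z : ℝ} (hz : |z| < 1) :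
    Summable fun k : ℕ => z ^ k / Gamma (a * k + b) :=
  .of_norm_bounded ((summable_geometric_of_lt_one (abs_nonneg z) hz).div_const _)
    (norm_pow_div_Gamma_le ha hb z)

lemma abs_mittagLeffler_sub_inv_Gamma_le {z q : ℝ} (hzq : |z| ≤ q) (hq : q < 1) :
    |mittagLeffler a b z - (Gamma b)⁻¹| ≤ q / (GammaMin * (1 - q)) := by
  have hq0 : 0 ≤ q := (abs_nonneg z).trans hzq
  have htail : mittagLeffler a b z - (Gamma b)⁻¹ =
      ∑' k : ℕ, z ^ (k + 1) / Gamma (a * ↑(k + 1) + b) := by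
    rw [mittagLeffler, (summable_mittagLeffler ha hb (hzq.trans_lt hq)).tsum_eq_zero_add]
    simp
  have hgeom : HasSum (fun k : ℕ => q / GammaMin * q ^ k) (q / GammaMin * (1 - q)⁻¹) :=
    (hasSum_geometric_of_lt_one hq0 hq).mul_left _
  rw [htail, ← Real.norm_eq_abs]
  refine (tsum_of_norm_bounded hgeom fun k => ?_).trans_eq (by field_simp)
  calc ‖z ^ (k + 1) / Gamma (a * ↑(k + 1) + b)‖ ≤ |z| ^ (k + 1) / GammaMin :=
        norm_pow_div_Gamma_le ha hb z _
    _ ≤ q ^ (k + 1) / GammaMin :=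
        div_le_div_of_nonneg_right (pow_le_pow_left₀ (abs_nonneg z) hzq _) GammaMin_pos.le
    _ = q / GammaMin * q ^ k := by ring

end MittagLeffler

theorem stmt_13_general (γ₃ lam : ℝ) (n : ℕ)
    (hγ₃ : γ₃ ∈ Set.Ioo (0:ℝ) 1) (hlam : lam ∈ Set.Ioo (0:ℝ) 1)
    (t : ℝ) (ht : 0 ≤ t) (hnt : (n : ℝ) * t ^ γ₃ < 1) :
    |mittagLeffler γ₃ (1 + γ₃) (-((n : ℝ) * lam ^ γ₃ * t ^ γ₃)) -
        mittagLeffler γ₃ (1 + γ₃) (-((n : ℝ) * t ^ γ₃))| ≤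
      2 * (n : ℝ) * t ^ γ₃ / (GammaMin * (1 - (n : ℝ) * t ^ γ₃)) := by
  obtain ⟨hγ0, -⟩ := hγ₃
  obtain ⟨hl0, hl1⟩ := hlam
  have hb : 0 < 1 + γ₃ := by linarith
  have hp : |-((n : ℝ) * lam ^ γ₃ * t ^ γ₃)| ≤ n * t ^ γ₃ := by
    rw [abs_neg, abs_of_nonneg (by positivity), mul_right_comm]
    exact mul_le_of_le_one_right (by positivity) (rpow_le_one hl0.le hl1.le hγ0.le)
  have hq : |-((n : ℝ) * t ^ γ₃)| ≤ n * t ^ γ₃ := by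
    rw [abs_neg, abs_of_nonneg (by positivity)]
  set E := mittagLeffler γ₃ (1 + γ₃)
  set c := (Gamma (1 + γ₃))⁻¹
  set p := (n : ℝ) * lam ^ γ₃ * t ^ γ₃
  set q := (n : ℝ) * t ^ γ₃ with hq_def
  calc |E (-p) - E (-q)| = |(E (-p) - c) - (E (-q) - c)| := by rw [sub_sub_sub_cancel_right]
    _ ≤ |E (-p) - c| + |E (-q) - c| := abs_sub _ _
    _ ≤ q / (GammaMin * (1 - q)) + q / (GammaMin * (1 - q)) :=
        add_le_add (abs_mittagLeffler_sub_inv_Gamma_le hγ0.le hb hp hnt)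
          (abs_mittagLeffler_sub_inv_Gamma_le hγ0.le hb hq hnt)
    _ = 2 * n * t ^ γ₃ / (GammaMin * (1 - q)) := by rw [hq_def]; ring

theorem stmt_13 (γ₃ lam : ℝ) (n : ℕ)
    (hγ₃ : γ₃ ∈ Set.Ioo (0:ℝ) 1) (hlam : lam ∈ Set.Ioo (0:ℝ) 1) (hn : 1 ≤ n)
    (t : ℝ) (ht : 0 ≤ t) (hnt : (n : ℝ) * t ^ γ₃ < 1) :
    |mittagLeffler γ₃ (1 + γ₃) (-((n : ℝ) * lam ^ γ₃ * t ^ γ₃)) -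
        mittagLeffler γ₃ (1 + γ₃) (-((n : ℝ) * t ^ γ₃))| ≤
      2 * (n : ℝ) * t ^ γ₃ / (GammaMin * (1 - (n : ℝ) * t ^ γ₃)) :=
  stmt_13_general γ₃ lam n hγ₃ hlam t ht hnt
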